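/- arXiv:2008.12634 — 5 statements merged into one kernel-verified Lean document; each statement's English description precedes it below -/
import Mathlib

section
/- The affine map r(z) = R(z) + (0, ..., 0, 1/(4n)) of A' descends to a well-defined bijection r̄ of the quotient A = A'/⟨w⟩ (i.e., r maps any two points of A' differing by an element of the subgroup generated by w to points differing by an element of that subgroup), and r̄ has order exactly 4n as a bijection of A. -/
noncomputable section

/-- The lattice Λ = ℤ + ℤτ as an additive subgroup of ℂ. -/
def Lam (τ : ℂ) : AddSubgroup ℂ := AddSubgroup.closure {1, τ}

/-- The "elliptic curve" E = ℂ/(ℤ + ℤτ) as an additive group. -/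
abbrev Ell (τ : ℂ) : Type := ℂ ⧸ Lam τ

/-- A' = E^{2n} × E'. -/
abbrev Aprime (n : ℕ) (τ τ' : ℂ) : Type := (Fin (2*n) → Ell τ) × Ell τ'

/-- w = (1/2, 1/2, ..., 1/2, 0) ∈ A'. -/
def wpt (n : ℕ) (τ τ' : ℂ) : Aprime n τ τ' :=
  (fun _ => ((1/2 : ℂ) : Ell τ), 0)

/-- The subgroup ⟨w⟩ of A' generated by w. -/
def wsub (n : ℕ) (τ τ' : ℂ) : AddSubgroup (Aprime n τ τ') :=
  AddSubgroup.closure {wpt n τ τ'}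

/-- A = A'/⟨w⟩. -/
abbrev Aq (n : ℕ) (τ τ' : ℂ) : Type := Aprime n τ τ' ⧸ wsub n τ τ'

/-- R(z₁,...,z_{2n},z_{2n+1}) = (-z_{2n}, z₁, ..., z_{2n-1}, z_{2n+1}). -/
def Rmap (n : ℕ) (τ τ' : ℂ) : Aprime n τ τ' → Aprime n τ τ' :=
  fun z => (fun i =>
    if i.val = 0 then -z.1 ⟨2*n-1, by have := i.isLt; omega⟩
    else z.1 ⟨i.val - 1, by have := i.isLt; omega⟩, z.2)

/-- The class of 1/(4n) in E'. -/
def cE' (n : ℕ) (τ' : ℂ) : Ell τ' := ((1/(4*(n : ℂ)) : ℂ) : Ell τ')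

/-- r(z) = R(z) + (0, ..., 0, 1/(4n)). -/
def rmap (n : ℕ) (τ τ' : ℂ) : Aprime n τ τ' → Aprime n τ τ' :=
  fun z => ((Rmap n τ τ' z).1, (Rmap n τ τ' z).2 + cE' n τ')

/-- The translation vector b: b_{2i-1} = 1/2 + τ/2, b_{2i} = τ/2 (1-indexed),
i.e. in 0-indexed terms, even indices carry 1/2 + τ/2 and odd indices carry τ/2. -/
def bvec (n : ℕ) (τ : ℂ) : Fin (2*n) → Ell τ :=
  fun i => if i.val % 2 = 0 then ((1/2 + τ/2 : ℂ) : Ell τ) else ((τ/2 : ℂ) : Ell τ)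

/-- S(z₁,...,z_{2n},z_{2n+1}) = (-z_{2n}, -z_{2n-1}, ..., -z₁, -z_{2n+1}). -/
def Smap (n : ℕ) (τ τ' : ℂ) : Aprime n τ τ' → Aprime n τ τ' :=
  fun z => (fun i => -z.1 ⟨2*n-1-i.val, by have := i.isLt; omega⟩, -z.2)

/-- s(z) = S(z) + (b₁, ..., b_{2n}, 0). -/
def smap (n : ℕ) (τ τ' : ℂ) : Aprime n τ τ' → Aprime n τ τ' :=
  fun z => (fun i => -z.1 ⟨2*n-1-i.val, by have := i.isLt; omega⟩ + bvec n τ i, -z.2)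

/-!
`R` is additive and fixes `w` (its one sign change sends `1/2` to `-1/2 ≡ 1/2`), so `r = R + c`
descends to `A` as `r̄ = R̄ + c̄`. On `E^{2n}` the map `R` is a negacyclic shift, hence `R^{2n} = -1`
and `R^{4n} = 1`; on `E'` the map `r` translates by `c = 1/(4n)`, which has order exactly `4n` in
`E'` because `τ' ∉ ℝ`. Every element of `⟨w⟩` has vanishing `E'`-coordinate, so `r̄^j` moves the
class of `0` for `0 < j < 4n`.
-/

theorem Function.bijective_of_iterate_eq_id {α : Type*} {f : α → α} {k : ℕ} (hk : 0 < k)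
    (h : f^[k] = id) : Function.Bijective f :=
  Function.bijective_iff_has_inverse.2 ⟨f^[k.pred],
    congrFun ((Function.iterate_pred_comp_of_pos f hk).trans h),
    congrFun ((Function.comp_iterate_pred_of_pos f hk).trans h)⟩

section NegShift

variable {G : Type*} [AddCommGroup G] {m : ℕ}

def negShift (m : ℕ) : (Fin m → G) →+ (Fin m → G) where
  toFun v i := if i.val = 0 then -v ⟨m - 1, by have := i.isLt; omega⟩
    else v ⟨i.val - 1, by have := i.isLt; omega⟩
  map_zero' := by funext i; split <;> simp
  map_add' v w := by funext i; simp only [Pi.add_apply]; split <;> abel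

theorem negShift_apply (v : Fin m → G) (i : Fin m) :
    negShift m v i = if i.val = 0 then -v ⟨m - 1, by have := i.isLt; omega⟩
      else v ⟨i.val - 1, by have := i.isLt; omega⟩ := rfl

theorem negShift_iterate_apply {k : ℕ} (hk : k ≤ m) (v : Fin m → G) (i : Fin m) :
    (negShift m)^[k] v i = if h : i.val < k then -v ⟨i.val + m - k, by omega⟩
      else v ⟨i.val - k, by have := i.isLt; omega⟩ := by
  induction k generalizing i with
  | zero => simp
  | succ k ih =>
    rw [Function.iterate_succ_apply', negShift_apply]
    simp only [ih (Nat.le_of_succ_le hk)]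
    grind

theorem negShift_iterate_self (v : Fin m → G) : (negShift m)^[m] v = -v := by
  funext i
  simp [negShift_iterate_apply le_rfl, i.isLt]

theorem negShift_iterate_two_mul : (negShift m)^[2 * m] = (id : (Fin m → G) → (Fin m → G)) := by
  funext v
  rw [two_mul, Function.iterate_add_apply, negShift_iterate_self, negShift_iterate_self, neg_neg,
    id]

end NegShift

section Lattice

variable {τ : ℂ}

theorem mem_Lam_iff {x : ℂ} : x ∈ Lam τ ↔ ∃ a b : ℤ, (a : ℂ) + b * τ = x := by
  simp [Lam, AddSubgroup.mem_closure_pair, zsmul_eq_mul]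

theorem one_mem_Lam : (1 : ℂ) ∈ Lam τ :=
  mem_Lam_iff.2 ⟨1, 0, by simp⟩

theorem ofReal_notMem_Lam (hτ : τ.im ≠ 0) {x : ℝ} (h0 : 0 < x) (h1 : x < 1) :
    (x : ℂ) ∉ Lam τ := by
  intro hx
  obtain ⟨a, b, hab⟩ := mem_Lam_iff.1 hx
  have hb : b = 0 := by simpa [hτ] using congrArg Complex.im hab
  subst hb
  have ha : (a : ℝ) = x := by simpa using congrArg Complex.re hab
  have : 0 < a := by exact_mod_cast ha ▸ h0
  have : a < 1 := by exact_mod_cast ha ▸ h1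
  omega

theorem addOrderOf_one_div_natCast (hτ : τ.im ≠ 0) {k : ℕ} (hk : 0 < k) :
    addOrderOf (((1 / k : ℂ)) : Ell τ) = k := by
  have hk' : (k : ℂ) ≠ 0 := by exact_mod_cast hk.ne'
  rw [addOrderOf_eq_iff hk]
  refine ⟨?_, fun j hjk hj => ?_⟩
  · rw [← QuotientAddGroup.mk_nsmul, nsmul_eq_mul, mul_one_div_cancel hk',
      QuotientAddGroup.eq_zero_iff]
    exact one_mem_Lam
  · have hjk' : (j : ℝ) / k < 1 := (div_lt_one (by positivity)).2 (by exact_mod_cast hjk)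
    rw [← QuotientAddGroup.mk_nsmul, Ne, QuotientAddGroup.eq_zero_iff, nsmul_eq_mul,
      mul_one_div, show (j : ℂ) / k = ((j / k : ℝ) : ℂ) by push_cast; rfl]
    exact ofReal_notMem_Lam hτ (by positivity) hjk'

end Lattice

section Rotation

variable {n : ℕ} {τ τ' : ℂ}

theorem addOrderOf_cE' (hn : 1 ≤ n) (hτ' : τ'.im ≠ 0) : addOrderOf (cE' n τ') = 4 * n := by
  rw [cE', show 4 * (n : ℂ) = ((4 * n : ℕ) : ℂ) by push_cast; rfl]
  exact addOrderOf_one_div_natCast hτ' (by omega)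

variable (n τ τ')

def RmapHom : Aprime n τ τ' →+ Aprime n τ τ' :=
  (negShift (2 * n)).prodMap (AddMonoidHom.id _)

theorem coe_RmapHom : ⇑(RmapHom n τ τ') = Rmap n τ τ' := rfl

theorem rmap_eq_add (z : Aprime n τ τ') : rmap n τ τ' z = Rmap n τ τ' z + (0, cE' n τ') := by
  ext <;> simp [rmap]

theorem rmap_iterate (k : ℕ) (z : Aprime n τ τ') :
    (rmap n τ τ')^[k] z = ((negShift (2 * n))^[k] z.1, z.2 + k • cE' n τ') := by
  induction k with
  | zero => simp
  | succ k ih =>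
    rw [Function.iterate_succ_apply', ih, Function.iterate_succ_apply', succ_nsmul, ← add_assoc]
    rfl

theorem Rmap_wpt : Rmap n τ τ' (wpt n τ τ') = wpt n τ τ' := by
  refine Prod.ext (funext fun i => ?_) rfl
  show negShift (2 * n) (fun _ => ((1 / 2 : ℂ) : Ell τ)) i = ((1 / 2 : ℂ) : Ell τ)
  rw [negShift_apply]
  split_ifs
  · rw [← QuotientAddGroup.mk_neg, QuotientAddGroup.eq, show -(-(1 / 2 : ℂ)) + 1 / 2 = 1 by ring]
    exact one_mem_Lam
  · rfl

theorem wsub_le_comap_RmapHom : wsub n τ τ' ≤ (wsub n τ τ').comap (RmapHom n τ τ') := by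
  rw [wsub, AddSubgroup.closure_le, Set.singleton_subset_iff]
  show Rmap n τ τ' (wpt n τ τ') ∈ wsub n τ τ'
  rw [Rmap_wpt]
  exact AddSubgroup.subset_closure rfl

theorem wsub_le_ker_snd :
    wsub n τ τ' ≤ (AddMonoidHom.snd (Fin (2 * n) → Ell τ) (Ell τ')).ker := by
  rw [wsub, AddSubgroup.closure_le, Set.singleton_subset_iff]
  rfl

theorem rmap_sub_rmap_mem_wsub {z z' : Aprime n τ τ'} (h : z - z' ∈ wsub n τ τ') :
    rmap n τ τ' z - rmap n τ τ' z' ∈ wsub n τ τ' := by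
  rw [rmap_eq_add, rmap_eq_add, add_sub_add_right_eq_sub, ← coe_RmapHom, ← map_sub]
  exact wsub_le_comap_RmapHom n τ τ' h

theorem rmap_iterate_four_mul (hn : 1 ≤ n) (hτ' : τ'.im ≠ 0) : (rmap n τ τ')^[4 * n] = id := by
  funext z
  have hc : (4 * n) • cE' n τ' = 0 := addOrderOf_cE' hn hτ' ▸ addOrderOf_nsmul_eq_zero _
  rw [rmap_iterate, hc, add_zero, show 4 * n = 2 * (2 * n) by ring, negShift_iterate_two_mul]
  rfl

def rbar (q : Aq n τ τ') : Aq n τ τ' :=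
  QuotientAddGroup.map _ _ (RmapHom n τ τ') (wsub_le_comap_RmapHom n τ τ') q +
    ((0, cE' n τ') : Aprime n τ τ')

theorem rbar_mk (z : Aprime n τ τ') : rbar n τ τ' z = rmap n τ τ' z := by
  rw [rmap_eq_add]
  rfl

theorem rbar_iterate_mk (k : ℕ) (z : Aprime n τ τ') :
    (rbar n τ τ')^[k] z = ((rmap n τ τ')^[k] z : Aprime n τ τ') :=
  ((Function.Semiconj.iterate_right (fun z => (rbar_mk n τ τ' z).symm) k) z).symm

theorem rbar_iterate_four_mul (hn : 1 ≤ n) (hτ' : τ'.im ≠ 0) : (rbar n τ τ')^[4 * n] = id := by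
  funext q
  induction q using QuotientAddGroup.induction_on with | H z => ?_
  rw [rbar_iterate_mk, rmap_iterate_four_mul n τ τ' hn hτ']
  rfl

theorem rbar_iterate_ne_id (hn : 1 ≤ n) (hτ' : τ'.im ≠ 0) {j : ℕ} (hj : 0 < j) (hj' : j < 4 * n) :
    (rbar n τ τ')^[j] ≠ id := by
  intro h
  have h0 := congrFun h ((0 : Aprime n τ τ') : Aq n τ τ')
  rw [rbar_iterate_mk, rmap_iterate, id, QuotientAddGroup.mk_zero,
    QuotientAddGroup.eq_zero_iff] at h0
  have hsnd : j • cE' n τ' = 0 := by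
    simpa using AddMonoidHom.mem_ker.1 (wsub_le_ker_snd n τ τ' h0)
  exact nsmul_ne_zero_of_lt_addOrderOf hj.ne' (addOrderOf_cE' hn hτ' ▸ hj') hsnd

end Rotation

theorem stmt_5_general (n : ℕ) (hn : 1 ≤ n) (τ τ' : ℂ) (hτ' : τ'.im ≠ 0) :
    (∀ z z' : Aprime n τ τ', z - z' ∈ wsub n τ τ' →
        rmap n τ τ' z - rmap n τ τ' z' ∈ wsub n τ τ') ∧
    ∃ rbar : Aq n τ τ' → Aq n τ τ',
      Function.Bijective rbar ∧
      (∀ z : Aprime n τ τ', rbar (z : Aq n τ τ') = ((rmap n τ τ' z : Aprime n τ τ') : Aq n τ τ')) ∧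
      rbar^[4*n] = id ∧
      ∀ j : ℕ, 0 < j → j < 4*n → rbar^[j] ≠ id :=
  ⟨fun _ _ => rmap_sub_rmap_mem_wsub n τ τ', rbar n τ τ',
    Function.bijective_of_iterate_eq_id (by omega) (rbar_iterate_four_mul n τ τ' hn hτ'),
    rbar_mk n τ τ', rbar_iterate_four_mul n τ τ' hn hτ',
    fun _ hj hj' => rbar_iterate_ne_id n τ τ' hn hτ' hj hj'⟩

/-- r descends to a well-defined bijection of A = A'/⟨w⟩ of order exactly 4n. -/
theorem stmt_5 (n : ℕ) (hn : 1 ≤ n) (τ τ' : ℂ) (hτ : τ.im ≠ 0) (hτ' : τ'.im ≠ 0) :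
    (∀ z z' : Aprime n τ τ', z - z' ∈ wsub n τ τ' →
        rmap n τ τ' z - rmap n τ τ' z' ∈ wsub n τ τ') ∧
    ∃ rbar : Aq n τ τ' → Aq n τ τ',
      Function.Bijective rbar ∧
      (∀ z : Aprime n τ τ', rbar (z : Aq n τ τ') = ((rmap n τ τ' z : Aprime n τ τ') : Aq n τ τ')) ∧
      rbar^[4*n] = id ∧
      ∀ j : ℕ, 0 < j → j < 4*n → rbar^[j] ≠ id :=
  stmt_5_general n hn τ τ' hτ'
end
end

section
/- For every integer j with 0 < j < 4n, the induced map r̄^j on A = A'/⟨w⟩ has no fixed points; equivalently, for every z ∈ A', the element r^j(z) - z of A' does not lie in the subgroup {0, w} generated by w. -/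
/-!
Only the last coordinate matters: `r` acts on it as translation by `1/(4n)`, so the last
coordinate of `r^j z - z` is the class of `j/(4n)` in `E'`, whereas every element of `⟨w⟩` has
last coordinate `0`. Since `Im τ' ≠ 0`, a real number lies in `ℤ + ℤτ'` only if it is an
integer, and `j/(4n) ∈ (0, 1)` is not. A fixed point of `r̄^j` would lift to some `z` with
`r^j z - z ∈ ⟨w⟩`.
-/

noncomputable section

lemma exists_int_eq_of_mem_Lam {τ z : ℂ} (hτ : τ.im ≠ 0) (hz : z ∈ Lam τ) (hzim : z.im = 0) :
    ∃ m : ℤ, z = m := by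
  obtain ⟨a, b, rfl⟩ := AddSubgroup.mem_closure_pair.mp hz
  have hb : b = 0 := by
    simp only [zsmul_eq_mul, Complex.add_im, Complex.mul_im, Complex.intCast_re,
      Complex.intCast_im, Complex.one_im, Complex.one_re] at hzim
    simpa [hτ] using hzim
  exact ⟨a, by simp [hb]⟩

lemma nsmul_cE'_ne_zero {n j : ℕ} {τ' : ℂ} (hτ' : τ'.im ≠ 0) (hj : 0 < j) (hjn : j < 4 * n) :
    j • cE' n τ' ≠ 0 := by
  have hn : (0 : ℝ) < 4 * n := by exact_mod_cast (show 0 < 4 * n by omega)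
  have hcast : j • cE' n τ' = (((j / (4 * n) : ℝ) : ℂ) : Ell τ') := by
    rw [cE', ← QuotientAddGroup.mk_nsmul]
    congr 1
    push_cast
    ring
  rw [hcast, Ne, QuotientAddGroup.eq_zero_iff]
  intro hmem
  obtain ⟨m, hm⟩ := exists_int_eq_of_mem_Lam hτ' hmem (Complex.ofReal_im _)
  have hm : (j / (4 * n) : ℝ) = m := by exact_mod_cast hm
  have hpos : (0 : ℝ) < m := hm ▸ by positivity
  have hlt : (m : ℝ) < 1 := hm ▸ (div_lt_one hn).mpr (by exact_mod_cast hjn)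
  have : (0 : ℤ) < m ∧ m < 1 := ⟨by exact_mod_cast hpos, by exact_mod_cast hlt⟩
  omega

lemma snd_eq_zero_of_mem_wsub {n : ℕ} {τ τ' : ℂ} {z : Aprime n τ τ'} (hz : z ∈ wsub n τ τ') :
    z.2 = 0 :=
  AddMonoidHom.mem_ker.mp <| (AddSubgroup.closure_le (AddMonoidHom.snd _ _).ker).mpr
    (Set.singleton_subset_iff.mpr (AddMonoidHom.mem_ker.mpr rfl)) hz

lemma rmap_iterate_snd (n : ℕ) (τ τ' : ℂ) (j : ℕ) (z : Aprime n τ τ') :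
    ((rmap n τ τ')^[j] z).2 = z.2 + j • cE' n τ' := by
  induction j with
  | zero => simp
  | succ k ih =>
    rw [Function.iterate_succ_apply', rmap, Rmap, ih, succ_nsmul, add_assoc]

lemma rmap_iterate_sub_notMem_wsub {n j : ℕ} {τ τ' : ℂ} (hτ' : τ'.im ≠ 0) (hj : 0 < j)
    (hjn : j < 4 * n) (z : Aprime n τ τ') : (rmap n τ τ')^[j] z - z ∉ wsub n τ τ' := fun hmem =>
  nsmul_cE'_ne_zero hτ' hj hjn <| by
    simpa [rmap_iterate_snd] using snd_eq_zero_of_mem_wsub hmem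

theorem stmt_6_general (n : ℕ) (τ τ' : ℂ) (hτ' : τ'.im ≠ 0) :
    ∀ j : ℕ, 0 < j → j < 4*n →
      (∀ z : Aprime n τ τ', (rmap n τ τ')^[j] z - z ∉ wsub n τ τ') ∧
      (∀ rbar : Aq n τ τ' → Aq n τ τ',
        (∀ z : Aprime n τ τ',
          rbar (z : Aq n τ τ') = ((rmap n τ τ' z : Aprime n τ τ') : Aq n τ τ')) →
        ∀ x : Aq n τ τ', rbar^[j] x ≠ x) := by
  intro j hj hjn
  refine ⟨rmap_iterate_sub_notMem_wsub hτ' hj hjn, fun rbar hrbar x hfix => ?_⟩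
  obtain ⟨z, rfl⟩ := QuotientAddGroup.mk_surjective x
  have hsemiconj : Function.Semiconj (QuotientAddGroup.mk : _ → Aq n τ τ') (rmap n τ τ') rbar :=
    fun z => (hrbar z).symm
  rw [← hsemiconj.iterate_right j z] at hfix
  exact rmap_iterate_sub_notMem_wsub hτ' hj hjn z (QuotientAddGroup.eq_iff_sub_mem.mp hfix)

/-- for 0 < j < 4n, r̄^j has no fixed points on A; equivalently
r^j(z) - z never lies in the subgroup generated by w. -/
theorem stmt_6 (n : ℕ) (hn : 1 ≤ n) (τ τ' : ℂ) (hτ : τ.im ≠ 0) (hτ' : τ'.im ≠ 0) :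
    ∀ j : ℕ, 0 < j → j < 4*n →
      (∀ z : Aprime n τ τ', (rmap n τ τ')^[j] z - z ∉ wsub n τ τ') ∧
      (∀ rbar : Aq n τ τ' → Aq n τ τ',
        (∀ z : Aprime n τ τ',
          rbar (z : Aq n τ τ') = ((rmap n τ τ' z : Aprime n τ τ') : Aq n τ τ')) →
        ∀ x : Aq n τ τ', rbar^[j] x ≠ x) :=
  stmt_6_general n τ τ' hτ'
end
end

section
/- The affine map s of A' defined by s(z_1, ..., z_{2n}, z_{2n+1}) = (-z_{2n} + b_1, -z_{2n-1} + b_2, ..., -z_1 + b_{2n}, -z_{2n+1}) descends to a well-defined bijection s̄ of the quotient A = A'/⟨w⟩, and s̄ has order exactly 2: s̄ ∘ s̄ = id and s̄ ≠ id. -/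
/-!
The map `s` is affine with linear part `S`, and `S w = -w`; hence `s (z + k w) = s z - k w`, so `s`
preserves cosets of `⟨w⟩`. Since `i` and `2n + 1 - i` have opposite parity, `b_i - b_{2n+1-i}` is
`±1/2 ≡ 1/2` in `E`, which makes `s ∘ s` the translation by `w`, trivial on `A`. Finally `s̄ ≠ id`
because `s 0 = (b, 0)` is not a multiple of `w`: its second coordinate `τ/2` is not congruent to a
half-integer modulo `ℤ + ℤτ` when `Im τ ≠ 0`.
-/

noncomputable section

namespace QuotientAddGroup

variable {G : Type*} [AddCommGroup G] (H : AddSubgroup G) {f : G → G}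

def mapOfSubMem (hf : ∀ z z', z - z' ∈ H → f z - f z' ∈ H) : G ⧸ H → G ⧸ H :=
  Quotient.map' f fun a b hab => by
    rw [leftRel_apply, neg_add_eq_sub] at hab ⊢
    exact hf b a hab

variable {H}

theorem mapOfSubMem_mk (hf : ∀ z z', z - z' ∈ H → f z - f z' ∈ H) (z : G) :
    mapOfSubMem H hf z = f z :=
  rfl

theorem mapOfSubMem_involutive (hf : ∀ z z', z - z' ∈ H → f z - f z' ∈ H)
    (hff : ∀ z, f (f z) - z ∈ H) : Function.Involutive (mapOfSubMem H hf) := by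
  rintro ⟨z⟩
  exact eq_iff_sub_mem.mpr (hff z)

theorem mapOfSubMem_ne_id (hf : ∀ z z', z - z' ∈ H → f z - f z' ∈ H) {z : G}
    (hz : f z - z ∉ H) : mapOfSubMem H hf ≠ id := fun h =>
  hz (eq_iff_sub_mem.mp (congrFun h (z : G ⧸ H)))

end QuotientAddGroup

theorem one_mem_lam {τ : ℂ} : (1 : ℂ) ∈ Lam τ :=
  AddSubgroup.subset_closure (Set.mem_insert _ _)

theorem zsmul_half_ne_half_tau {τ : ℂ} (hτ : τ.im ≠ 0) (k : ℤ) :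
    k • ((1 / 2 : ℂ) : Ell τ) ≠ ((τ / 2 : ℂ) : Ell τ) := by
  rw [← QuotientAddGroup.mk_zsmul, Ne, QuotientAddGroup.eq_iff_sub_mem]
  intro h
  obtain ⟨a, b, hab⟩ := AddSubgroup.mem_closure_pair.mp h
  have him : (b : ℝ) * τ.im = -(τ.im / 2) := by
    simpa using congrArg Complex.im hab
  field_simp at him
  have hb : 2 * b = -1 := by exact_mod_cast (by push_cast; linarith : ((2 * b : ℤ) : ℝ) = -1)
  omega

section

variable {n : ℕ} {τ τ' : ℂ}

theorem mem_wsub_iff {x : Aprime n τ τ'} : x ∈ wsub n τ τ' ↔ ∃ k : ℤ, k • wpt n τ τ' = x :=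
  AddSubgroup.mem_closure_singleton

theorem wpt_mem_wsub : wpt n τ τ' ∈ wsub n τ τ' :=
  AddSubgroup.subset_closure rfl

theorem smap_apply_fst (z : Aprime n τ τ') (i : Fin (2 * n)) :
    (smap n τ τ' z).1 i = -z.1 i.rev + bvec n τ i := by
  have hrev : i.rev = ⟨2 * n - 1 - i.val, by omega⟩ := Fin.ext (by simp only [Fin.val_rev]; omega)
  rw [hrev]
  rfl

theorem smap_add_zsmul_wpt (z : Aprime n τ τ') (k : ℤ) :
    smap n τ τ' (z + k • wpt n τ τ') = smap n τ τ' z - k • wpt n τ τ' := by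
  ext i
  · simp only [wpt, one_div, Prod.smul_mk, smul_zero, smap_apply_fst, Prod.fst_add,
      Pi.add_apply, Pi.smul_apply, neg_add_rev, Prod.fst_sub, Pi.sub_apply]
    abel
  · simp [smap, wpt]

theorem smap_sub_smap_mem_wsub {z z' : Aprime n τ τ'} (h : z - z' ∈ wsub n τ τ') :
    smap n τ τ' z - smap n τ τ' z' ∈ wsub n τ τ' := by
  obtain ⟨k, hk⟩ := mem_wsub_iff.mp h
  rw [sub_eq_iff_eq_add'.mp hk.symm, smap_add_zsmul_wpt, sub_sub_cancel_left]
  exact neg_mem (zsmul_mem wpt_mem_wsub k)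

theorem bvec_sub_bvec_rev (i : Fin (2 * n)) :
    bvec n τ i - bvec n τ i.rev = ((1 / 2 : ℂ) : Ell τ) := by
  have hrev : i.rev.val = 2 * n - 1 - i.val := by simp only [Fin.val_rev]; omega
  simp only [bvec, hrev]
  split_ifs <;> try omega
  · rw [← QuotientAddGroup.mk_sub]
    exact congrArg _ (by ring)
  · rw [← QuotientAddGroup.mk_sub, QuotientAddGroup.eq_iff_sub_mem]
    convert neg_mem one_mem_lam using 1
    ring

theorem smap_smap (z : Aprime n τ τ') : smap n τ τ' (smap n τ τ' z) = z + wpt n τ τ' := by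
  ext i
  · simp only [smap_apply_fst, Fin.rev_rev, Prod.fst_add, Pi.add_apply, wpt, ← bvec_sub_bvec_rev i]
    abel
  · simp [smap, wpt]

theorem smap_zero_not_mem_wsub (hn : 1 ≤ n) (hτ : τ.im ≠ 0) : smap n τ τ' 0 ∉ wsub n τ τ' := by
  intro h
  obtain ⟨k, hk⟩ := mem_wsub_iff.mp h
  have h1 : k • ((1 / 2 : ℂ) : Ell τ) = ((τ / 2 : ℂ) : Ell τ) := by
    simpa [smap_apply_fst, wpt, bvec] using congrFun (congrArg Prod.fst hk) ⟨1, by omega⟩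
  exact zsmul_half_ne_half_tau hτ k h1

end

theorem stmt_10_general (n : ℕ) (hn : 1 ≤ n) (τ τ' : ℂ) (hτ : τ.im ≠ 0) :
    (∀ z z' : Aprime n τ τ', z - z' ∈ wsub n τ τ' →
        smap n τ τ' z - smap n τ τ' z' ∈ wsub n τ τ') ∧
    ∃ sbar : Aq n τ τ' → Aq n τ τ',
      Function.Bijective sbar ∧
      (∀ z : Aprime n τ τ', sbar (z : Aq n τ τ') = ((smap n τ τ' z : Aprime n τ τ') : Aq n τ τ')) ∧
      sbar ∘ sbar = id ∧ sbar ≠ id := by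
  have hs : ∀ z z' : Aprime n τ τ', z - z' ∈ wsub n τ τ' →
      smap n τ τ' z - smap n τ τ' z' ∈ wsub n τ τ' := fun _ _ => smap_sub_smap_mem_wsub
  have hinv := QuotientAddGroup.mapOfSubMem_involutive hs fun z => by
    rw [smap_smap, add_sub_cancel_left]
    exact wpt_mem_wsub
  refine ⟨hs, _, hinv.bijective, QuotientAddGroup.mapOfSubMem_mk hs, hinv.comp_self,
    QuotientAddGroup.mapOfSubMem_ne_id hs (z := 0) ?_⟩
  rw [sub_zero]
  exact smap_zero_not_mem_wsub hn hτ

/-- s descends to a well-defined bijection s̄ of A = A'/⟨w⟩ of order exactly 2. -/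
theorem stmt_10 (n : ℕ) (hn : 1 ≤ n) (τ τ' : ℂ) (hτ : τ.im ≠ 0) (hτ' : τ'.im ≠ 0) :
    (∀ z z' : Aprime n τ τ', z - z' ∈ wsub n τ τ' →
        smap n τ τ' z - smap n τ τ' z' ∈ wsub n τ τ') ∧
    ∃ sbar : Aq n τ τ' → Aq n τ τ',
      Function.Bijective sbar ∧
      (∀ z : Aprime n τ τ', sbar (z : Aq n τ τ') = ((smap n τ τ' z : Aprime n τ τ') : Aq n τ τ')) ∧
      sbar ∘ sbar = id ∧ sbar ≠ id :=
  stmt_10_general n hn τ τ' hτ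
end
end

section
/- The map r̄ ∘ s̄ induced on A = A'/⟨w⟩ by the composite rs has no fixed points; equivalently, for every z ∈ A', the element (rs)(z) - z of A' does not lie in the subgroup {0, w} generated by w. -/
noncomputable section

/-!
Only the first coordinate matters. There `rs` sends `z₁` to `z₁ - τ/2`, so `(rs)(z) - z` has first
coordinate `-τ/2`, whereas every multiple `k • w` has first coordinate `k/2`. Their difference
`k/2 + τ/2` has imaginary part `Im τ / 2`, which is not an integer multiple of `Im τ`, so it is not
in `Λ`.
-/

lemma exists_im_eq_of_mem_Lam {τ z : ℂ} (hz : z ∈ Lam τ) : ∃ l : ℤ, z.im = l * τ.im := by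
  obtain ⟨m, l, rfl⟩ := AddSubgroup.mem_closure_pair.mp hz
  exact ⟨l, by simp [zsmul_eq_mul]⟩

lemma zsmul_half_ne_neg_half_tau {τ : ℂ} (hτ : τ.im ≠ 0) (k : ℤ) :
    k • ((1 / 2 : ℂ) : Ell τ) ≠ -((τ / 2 : ℂ) : Ell τ) := by
  intro h
  rw [← QuotientAddGroup.mk_zsmul, ← QuotientAddGroup.mk_neg,
    QuotientAddGroup.eq_iff_sub_mem] at h
  obtain ⟨l, hl⟩ := exists_im_eq_of_mem_Lam h
  have hl' : (2 * l - 1 : ℝ) * τ.im = 0 := by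
    simp only [zsmul_eq_mul, Complex.sub_im, Complex.mul_im, Complex.neg_im, Complex.div_im,
      Complex.intCast_re, Complex.intCast_im] at hl
    norm_num at hl
    linear_combination -2 * hl
  have h2l : (2 * l : ℝ) = 1 := by
    linarith [(mul_eq_zero.mp hl').resolve_right hτ]
  have : 2 * l = 1 := by exact_mod_cast h2l
  omega

lemma rmap_smap_sub_fst_zero {n : ℕ} {τ τ' : ℂ} (h : 0 < 2 * n) (z : Aprime n τ τ') :
    (rmap n τ τ' (smap n τ τ' z) - z).1 ⟨0, h⟩ = -((τ / 2 : ℂ) : Ell τ) := by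
  have hodd : (2 * n - 1) % 2 = 1 := by omega
  have hb : bvec n τ ⟨2 * n - 1, by omega⟩ = ((τ / 2 : ℂ) : Ell τ) := by
    simp [bvec, hodd]
  simp only [rmap, Rmap, smap, Prod.fst_sub, Pi.sub_apply, if_true, Nat.sub_self, hb]
  abel

lemma rmap_smap_sub_notMem_wsub {n : ℕ} (hn : 1 ≤ n) {τ : ℂ} (hτ : τ.im ≠ 0) (τ' : ℂ)
    (z : Aprime n τ τ') : rmap n τ τ' (smap n τ τ' z) - z ∉ wsub n τ τ' := by
  intro hmem
  obtain ⟨k, hk⟩ := AddSubgroup.mem_closure_singleton.mp hmem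
  have h : 0 < 2 * n := by omega
  apply zsmul_half_ne_neg_half_tau hτ k
  rw [← rmap_smap_sub_fst_zero h z, ← hk]
  rfl

lemma QuotientAddGroup.ne_of_sub_notMem {G : Type*} [AddCommGroup G] {H : AddSubgroup G}
    {f : G → G} (hf : ∀ z, f z - z ∉ H) {g : G ⧸ H → G ⧸ H}
    (hg : ∀ z : G, g z = (f z : G ⧸ H)) (x : G ⧸ H) : g x ≠ x := by
  obtain ⟨z, rfl⟩ := QuotientAddGroup.mk_surjective x
  rw [hg, Ne, QuotientAddGroup.eq_iff_sub_mem]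
  exact hf z

theorem stmt_12_general (n : ℕ) (hn : 1 ≤ n) (τ τ' : ℂ) (hτ : τ.im ≠ 0) :
    (∀ z : Aprime n τ τ', rmap n τ τ' (smap n τ τ' z) - z ∉ wsub n τ τ') ∧
    (∀ rbar sbar : Aq n τ τ' → Aq n τ τ',
      (∀ z : Aprime n τ τ',
        rbar (z : Aq n τ τ') = ((rmap n τ τ' z : Aprime n τ τ') : Aq n τ τ')) →
      (∀ z : Aprime n τ τ',
        sbar (z : Aq n τ τ') = ((smap n τ τ' z : Aprime n τ τ') : Aq n τ τ')) →
      ∀ x : Aq n τ τ', rbar (sbar x) ≠ x) := by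
  have key := rmap_smap_sub_notMem_wsub hn hτ τ'
  refine ⟨key, fun rbar sbar hr hs => QuotientAddGroup.ne_of_sub_notMem key ?_⟩
  intro z
  rw [hs, hr]

/-- r̄ ∘ s̄ has no fixed points on A; equivalently (rs)(z) - z never lies
in the subgroup generated by w. -/
theorem stmt_12 (n : ℕ) (hn : 1 ≤ n) (τ τ' : ℂ) (hτ : τ.im ≠ 0) (hτ' : τ'.im ≠ 0) :
    (∀ z : Aprime n τ τ', rmap n τ τ' (smap n τ τ' z) - z ∉ wsub n τ τ') ∧
    (∀ rbar sbar : Aq n τ τ' → Aq n τ τ',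
      (∀ z : Aprime n τ τ',
        rbar (z : Aq n τ τ') = ((rmap n τ τ' z : Aprime n τ τ') : Aq n τ τ')) →
      (∀ z : Aprime n τ τ',
        sbar (z : Aq n τ τ') = ((smap n τ τ' z : Aprime n τ τ') : Aq n τ τ')) →
      ∀ x : Aq n τ τ', rbar (sbar x) ≠ x) :=
  stmt_12_general n hn τ τ' hτ
end
end

section
/- The map s̄ induced on A = A'/⟨w⟩ by s has no fixed points; equivalently, for every z ∈ A', the element s(z) - z of A' does not lie in the subgroup {0, w} generated by w. -/
noncomputable section

/-!
Only the first and last coordinates of `E^{2n}` matter. Writing `d = s(z) - z`, the difference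
`d₁ - d_{2n}` does not depend on `z`: it equals `b₁ - b_{2n} = 1/2`, which is nonzero in `E`
because `τ ∉ ℝ`. Every element of `⟨w⟩` has all its `E`-coordinates equal, so `d ∉ ⟨w⟩`.
-/

lemma one_half_notMem_Lam {τ : ℂ} (hτ : τ.im ≠ 0) : (1 / 2 : ℂ) ∉ Lam τ := by
  rw [Lam, AddSubgroup.mem_closure_pair]
  rintro ⟨m, k, h⟩
  have hk : (k : ℝ) = 0 := by
    simpa [hτ] using congrArg Complex.im h
  have hm : (m : ℝ) * 2 = 1 := by
    have := congrArg Complex.re h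
    simp only [zsmul_eq_mul, mul_one, Complex.add_re, Complex.intCast_re, Complex.mul_re, hk,
      zero_mul, Complex.intCast_im, sub_self, add_zero, one_div, Complex.inv_re, Complex.re_ofNat,
      Complex.normSq_ofNat, div_self_mul_self'] at this
    linarith
  have : m * 2 = 1 := by exact_mod_cast hm
  omega

lemma QuotientAddGroup.ne_self_of_sub_notMem {G : Type*} [AddCommGroup G] {H : AddSubgroup G}
    {f : G → G} (hf : ∀ z, f z - z ∉ H) {g : G ⧸ H → G ⧸ H} (hg : ∀ z : G, g z = f z)
    (x : G ⧸ H) : g x ≠ x := by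
  induction x using QuotientAddGroup.induction_on with
  | H z =>
    rw [hg, Ne, QuotientAddGroup.eq_iff_sub_mem]
    exact hf z

lemma fst_apply_eq_of_mem_wsub {n : ℕ} {τ τ' : ℂ} {x : Aprime n τ τ'} (hx : x ∈ wsub n τ τ')
    (i j : Fin (2 * n)) : x.1 i = x.1 j := by
  obtain ⟨m, rfl⟩ := AddSubgroup.mem_closure_singleton.mp hx
  simp [wpt]

lemma smap_sub_self_fst_first_sub_last {n : ℕ} (hn : 1 ≤ n) (τ τ' : ℂ) (z : Aprime n τ τ') :
    (smap n τ τ' z - z).1 ⟨0, by omega⟩ - (smap n τ τ' z - z).1 ⟨2 * n - 1, by omega⟩ =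
      ((1 / 2 : ℂ) : Ell τ) := by
  have hlast : (2 * n - 1) % 2 = 1 := by omega
  simp only [smap, Prod.fst_sub, Pi.sub_apply, bvec, Nat.sub_zero, Nat.sub_self,
    Nat.zero_mod, hlast, if_true, one_ne_zero, if_false]
  rw [show ((1 / 2 : ℂ) : Ell τ) = ((1 / 2 + τ / 2 : ℂ) : Ell τ) - ((τ / 2 : ℂ) : Ell τ) by
    rw [← QuotientAddGroup.mk_sub]; ring_nf]
  abel

theorem stmt_13_general (n : ℕ) (hn : 1 ≤ n) (τ τ' : ℂ) (hτ : τ.im ≠ 0) :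
    (∀ z : Aprime n τ τ', smap n τ τ' z - z ∉ wsub n τ τ') ∧
    (∀ sbar : Aq n τ τ' → Aq n τ τ',
      (∀ z : Aprime n τ τ',
        sbar (z : Aq n τ τ') = ((smap n τ τ' z : Aprime n τ τ') : Aq n τ τ')) →
      ∀ x : Aq n τ τ', sbar x ≠ x) := by
  have hfree : ∀ z : Aprime n τ τ', smap n τ τ' z - z ∉ wsub n τ τ' := fun z hz => by
    have h := smap_sub_self_fst_first_sub_last hn τ τ' z
    rw [fst_apply_eq_of_mem_wsub hz _ ⟨2 * n - 1, by omega⟩, sub_self, eq_comm,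
      QuotientAddGroup.eq_zero_iff] at h
    exact one_half_notMem_Lam hτ h
  exact ⟨hfree, fun _ hs => QuotientAddGroup.ne_self_of_sub_notMem hfree hs⟩

/-- s̄ has no fixed points on A; equivalently s(z) - z never lies in the
subgroup generated by w. -/
theorem stmt_13 (n : ℕ) (hn : 1 ≤ n) (τ τ' : ℂ) (hτ : τ.im ≠ 0) (hτ' : τ'.im ≠ 0) :
    (∀ z : Aprime n τ τ', smap n τ τ' z - z ∉ wsub n τ τ') ∧
    (∀ sbar : Aq n τ τ' → Aq n τ τ',
      (∀ z : Aprime n τ τ',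
        sbar (z : Aq n τ τ') = ((smap n τ τ' z : Aprime n τ τ') : Aq n τ τ')) →
      ∀ x : Aq n τ τ', sbar x ≠ x) :=
  stmt_13_general n hn τ τ' hτ
end
end
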